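/- If 𝒜 is a structure of bounded degree whose growth function g_𝒜(n) = max_a |S(n,a)| is unbounded, then g_𝒜(n) ≥ n for all n ≥ 1. -/
import Mathlib


/-- The Gaifman graph of a relational structure `(A, (rel s)_{s ∈ S})`:
two distinct elements are adjacent iff they occur together in a tuple of some
relation. -/
def gaifmanGraph {A : Type*} {S : Type*} (ar : S → ℕ)
    (rel : ∀ s : S, (Fin (ar s) → A) → Prop) : SimpleGraph A :=
  SimpleGraph.fromRel (fun a b =>
    ∃ (s : S) (x : Fin (ar s) → A) (j k : Fin (ar s)),
      rel s x ∧ x j = a ∧ x k = b)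

/-- The sphere of radius `n` around `a` in a graph. -/
def graphSphere {V : Type*} (G : SimpleGraph V) (n : ℕ) (a : V) : Set V :=
  {b | ∃ w : G.Walk a b, w.length ≤ n}

section Aux

variable {V : Type*} {G : SimpleGraph V}

lemma mem_graphSphere_iff {n : ℕ} {a b : V} :
    b ∈ graphSphere G n a ↔ ∃ w : G.Walk b a, w.length ≤ n := by
  constructor
  · rintro ⟨w, hw⟩; exact ⟨w.reverse, by simpa using hw⟩
  · rintro ⟨w, hw⟩; exact ⟨w.reverse, by simpa using hw⟩

lemma self_mem_graphSphere (n : ℕ) (a : V) : a ∈ graphSphere G n a :=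
  ⟨SimpleGraph.Walk.nil, by simp⟩

lemma graphSphere_mono {m n : ℕ} (h : m ≤ n) (a : V) :
    graphSphere G m a ⊆ graphSphere G n a := by
  rintro b ⟨w, hw⟩; exact ⟨w, hw.trans h⟩

lemma graphSphere_succ_subset (n : ℕ) (a : V) :
    graphSphere G (n+1) a ⊆ {a} ∪ ⋃ c ∈ graphSphere G n a, G.neighborSet c := by
  intro b hb
  rw [mem_graphSphere_iff] at hb
  obtain ⟨w, hw⟩ := hb
  cases w with
  | nil => left; rfl
  | @cons _ c _ h p =>
      right
      refine Set.mem_biUnion (mem_graphSphere_iff.mpr ⟨p, ?_⟩) h.symm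
      simpa using Nat.le_of_succ_le_succ hw

lemma graphSphere_finite (hlf : ∀ a : V, (G.neighborSet a).Finite) (n : ℕ) (a : V) :
    (graphSphere G n a).Finite := by
  induction n with
  | zero =>
      apply Set.Finite.subset (Set.finite_singleton a)
      rintro b ⟨w, hw⟩
      have hb := SimpleGraph.Walk.eq_of_length_eq_zero (Nat.le_zero.mp hw)
      simp [hb]
  | succ n ih =>
      exact Set.Finite.subset
        ((Set.finite_singleton a).union (ih.biUnion fun c _ => hlf c))
        (graphSphere_succ_subset n a)

lemma graphSphere_stab {n : ℕ} {a : V}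
    (h : graphSphere G (n+1) a ⊆ graphSphere G n a) :
    ∀ m, graphSphere G (n+m) a ⊆ graphSphere G n a := by
  intro m
  induction m with
  | zero => exact subset_rfl
  | succ m ih =>
      intro b hb
      rw [mem_graphSphere_iff] at hb
      obtain ⟨w, hw⟩ := hb
      cases w with
      | nil => exact self_mem_graphSphere n a
      | @cons _ c _ hadj p =>
          have hc : c ∈ graphSphere G n a := by
            apply ih
            rw [mem_graphSphere_iff]
            refine ⟨p, ?_⟩
            simp only [SimpleGraph.Walk.length_cons] at hw
            omega
          obtain ⟨w', hw'⟩ := mem_graphSphere_iff.mp hc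
          apply h
          rw [mem_graphSphere_iff]
          exact ⟨SimpleGraph.Walk.cons hadj w', by simp; omega⟩

end Aux

/-- If `𝒜` is a structure of bounded degree (at most `δ` neighbors in the
Gaifman graph) and its growth function `g(n) = max_a |S(n,a)|` is unbounded,
then `g(n) ≥ n` for all `n ≥ 1`. -/
theorem growth_ge_linear_of_unbounded {A : Type*} {S : Type*} (ar : S → ℕ)
    (rel : ∀ s : S, (Fin (ar s) → A) → Prop) (δ : ℕ)
    (hdeg : ∀ a : A, ((gaifmanGraph ar rel).neighborSet a).Finite ∧
      ((gaifmanGraph ar rel).neighborSet a).ncard ≤ δ)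
    (g : ℕ → ℕ)
    (hle : ∀ (n : ℕ) (a : A), (graphSphere (gaifmanGraph ar rel) n a).ncard ≤ g n)
    (hmax : ∀ n : ℕ, ∃ a : A, (graphSphere (gaifmanGraph ar rel) n a).ncard = g n)
    (hunb : ∀ m : ℕ, ∃ n : ℕ, m < g n) :
    ∀ n : ℕ, 1 ≤ n → n ≤ g n := by
  intro n hn
  by_contra hlt
  push_neg at hlt
  set G := gaifmanGraph ar rel with hG
  have hlf : ∀ a : A, (G.neighborSet a).Finite := fun a => (hdeg a).1
  have key : ∀ (m : ℕ) (a : A), (graphSphere G m a).ncard ≤ g n := by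
    intro m a
    have fin : ∀ k, (graphSphere G k a).Finite := fun k => graphSphere_finite hlf k a
    have mono : ∀ k l, k ≤ l →
        (graphSphere G k a).ncard ≤ (graphSphere G l a).ncard :=
      fun k l h => Set.ncard_le_ncard (graphSphere_mono h a) (fin l)
    by_cases hmn : m ≤ n
    · exact (mono m n hmn).trans (hle n a)
    have hpos : 0 < (graphSphere G 0 a).ncard :=
      (Set.ncard_pos (fin 0)).mpr ⟨a, self_mem_graphSphere 0 a⟩
    have hpigeon : ∃ k < n,
        (graphSphere G (k+1) a).ncard ≤ (graphSphere G k a).ncard := by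
      by_contra hc
      push_neg at hc
      have hchain : ∀ k, k ≤ n → k + 1 ≤ (graphSphere G k a).ncard := by
        intro k hk
        induction k with
        | zero => omega
        | succ k ih =>
            have h1 := ih (by omega)
            have h2 := hc k (by omega)
            omega
      have h3 := hchain n le_rfl
      have h4 := hle n a
      omega
    obtain ⟨k, hkn, hk⟩ := hpigeon
    have heq : graphSphere G (k+1) a ⊆ graphSphere G k a := by
      rw [Set.eq_of_subset_of_ncard_le (graphSphere_mono (Nat.le_succ k) a) hk (fin (k+1))]
    have hm : graphSphere G m a ⊆ graphSphere G k a := by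
      have hmk : k + (m - k) = m := by omega
      have := graphSphere_stab heq (m - k)
      rwa [hmk] at this
    calc (graphSphere G m a).ncard ≤ (graphSphere G k a).ncard :=
          Set.ncard_le_ncard hm (fin k)
      _ ≤ (graphSphere G n a).ncard := mono k n hkn.le
      _ ≤ g n := hle n a
  obtain ⟨m, hm⟩ := hunb (g n)
  obtain ⟨a, ha⟩ := hmax m
  have := key m a
  omega
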